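/- q-parametrization of the three-cable continuum arm: let L, d, γ, φ be real numbers and define the cable lengths l₁ = L − d·γ·cos φ, l₂ = L + d·γ·sin(π/6 − φ), l₃ = L + d·γ·sin(π/6 + φ). Then the linear combinations δ_x = (1/3)(l₂ + l₃ − 2 l₁) and δ_y = (√3/3)(l₃ − l₂) satisfy δ_x = d·γ·cos φ and δ_y = d·γ·sin φ; moreover, if d·γ ≥ 0 then √(δ_x² + δ_y²) = d·γ. -/
import Mathlib

open Real

/-- q-parametrization of the three-cable continuum arm: for real
`L, d, γ, φ`, with cable lengths `l₁ = L − dγ cos φ`, `l₂ = L + dγ sin(π/6 − φ)`,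
`l₃ = L + dγ sin(π/6 + φ)`, the combinations `δ_x = (1/3)(l₂ + l₃ − 2l₁)` and
`δ_y = (√3/3)(l₃ - l₂)` satisfy `δ_x = dγ cos φ` and `δ_y = dγ sin φ`; moreover
if `dγ ≥ 0` then `√(δ_x² + δ_y²) = dγ`. -/
theorem q_parametrization (L d γ φ : ℝ)
    (l₁ l₂ l₃ δx δy : ℝ)
    (hl₁ : l₁ = L - d * γ * Real.cos φ)
    (hl₂ : l₂ = L + d * γ * Real.sin (π / 6 - φ))
    (hl₃ : l₃ = L + d * γ * Real.sin (π / 6 + φ))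
    (hδx : δx = (1 / 3) * (l₂ + l₃ - 2 * l₁))
    (hδy : δy = (Real.sqrt 3 / 3) * (l₃ - l₂)) :
    δx = d * γ * Real.cos φ ∧ δy = d * γ * Real.sin φ
      ∧ (0 ≤ d * γ → Real.sqrt (δx ^ 2 + δy ^ 2) = d * γ) := by
  have hs : Real.sin (π / 6) = 1 / 2 := Real.sin_pi_div_six
  have hc : Real.cos (π / 6) = Real.sqrt 3 / 2 := Real.cos_pi_div_six
  have h3 : Real.sqrt 3 ^ 2 = 3 := Real.sq_sqrt (by norm_num)
  have hx : δx = d * γ * Real.cos φ := by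
    rw [hδx, hl₁, hl₂, hl₃, Real.sin_sub, Real.sin_add, hs, hc]; ring
  have hy : δy = d * γ * Real.sin φ := by
    rw [hδy, hl₂, hl₃, Real.sin_sub, Real.sin_add, hs, hc]
    ring_nf
    rw [h3]
    ring
  refine ⟨hx, hy, fun hdγ => ?_⟩
  rw [hx, hy]
  have : (d * γ * Real.cos φ) ^ 2 + (d * γ * Real.sin φ) ^ 2 = (d * γ) ^ 2 := by
    nlinarith [Real.sin_sq_add_cos_sq φ]
  rw [this, Real.sqrt_sq hdγ]
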